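/- For every positive integer m ≥ 1 and real α, the integral ∫₀^∞ exp(-π m w²/2) · erfc(√(π/2)·w)^m · (cos(α π w²/2) + i sin(α π w²/2)) dw is a nonzero complex number, where erfc(x) = (2/√π)∫ₓ^∞ e^{-y²} dy. -/

import Mathlib

open Real MeasureTheory

noncomputable def erfc (x : ℝ) : ℝ := (2 / Real.sqrt π) * ∫ y in Set.Ioi x, Real.exp (-y ^ 2)

/-!
Write the integrand as `W(w) e^{iβw²}` with `β = απ/2` and `W > 0`. For `β = 0` the real part
`∫ W` is positive. Otherwise look at the imaginary part: `G(w) = W(w)/w` is strictly decreasing,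
and integrating by parts against `1 - cos(βw²)`, whose derivative is `2βw sin(βw²)`, gives
`2β ∫ W(w) sin(βw²) dw = -∫ G'(w) (1 - cos(βw²)) dw > 0`.
-/

open Set Filter Topology

theorem hasDerivAt_integral_Ioi {h : ℝ → ℝ} (hi : Integrable h) (hc : Continuous h) (x : ℝ) :
    HasDerivAt (fun t => ∫ y in Ioi t, h y) (-h x) x := by
  have hsplit : (fun t => ∫ y in Ioi t, h y) = fun t => (∫ y in Ioi 0, h y) - ∫ y in 0..t, h y := by
    funext t
    exact eq_sub_of_add_eq'
      (intervalIntegral.integral_interval_add_Ioi hi.integrableOn hi.integrableOn)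
  rw [hsplit]
  exact (hc.integral_hasStrictDerivAt 0 x).hasDerivAt.const_sub _

theorem integrable_exp_neg_sq : Integrable fun y : ℝ => exp (-y ^ 2) := by
  simpa using integrable_exp_neg_mul_sq one_pos

theorem hasDerivAt_erfc (x : ℝ) : HasDerivAt erfc (-(2 / √π * exp (-x ^ 2))) x := by
  have h := (hasDerivAt_integral_Ioi integrable_exp_neg_sq (by fun_prop) x).const_mul (2 / √π)
  rwa [mul_neg] at h

@[fun_prop]
theorem continuous_erfc : Continuous erfc :=
  continuous_iff_continuousAt.2 fun x => (hasDerivAt_erfc x).continuousAt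

theorem erfc_pos (x : ℝ) : 0 < erfc x := by
  refine mul_pos (by positivity) ?_
  rw [setIntegral_pos_iff_support_of_nonneg_ae (ae_of_all _ fun y => (exp_pos _).le)
    integrable_exp_neg_sq.integrableOn]
  simp [Function.support, (exp_pos _).ne']

theorem erfc_le_two (x : ℝ) : erfc x ≤ 2 := by
  have hle : ∫ y in Ioi x, exp (-y ^ 2) ≤ √π := by
    calc ∫ y in Ioi x, exp (-y ^ 2)
        ≤ ∫ y, exp (-y ^ 2) :=
          setIntegral_le_integral integrable_exp_neg_sq (ae_of_all _ fun y => (exp_pos _).le)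
      _ = √π := by simpa using integral_gaussian 1
  calc erfc x ≤ 2 / √π * √π := mul_le_mul_of_nonneg_left hle (by positivity)
    _ = 2 := div_mul_cancel₀ _ (by positivity)

theorem Integrable.mul_sin_mul_sq {μ : Measure ℝ} {f : ℝ → ℝ} (hf : Integrable f μ) (β : ℝ) :
    Integrable (fun w => f w * sin (β * w ^ 2)) μ :=
  hf.mul_bdd (by fun_prop) (ae_of_all _ fun w => by simpa using abs_sin_le_one (β * w ^ 2))

theorem Integrable.mul_cos_mul_sq {μ : Measure ℝ} {f : ℝ → ℝ} (hf : Integrable f μ) (β : ℝ) :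
    Integrable (fun w => f w * cos (β * w ^ 2)) μ :=
  hf.mul_bdd (by fun_prop) (ae_of_all _ fun w => by simpa using abs_cos_le_one (β * w ^ 2))

section SinePositivity

variable {f : ℝ → ℝ} {a β C : ℝ}

theorem norm_one_sub_cos_le_two (x : ℝ) : ‖1 - cos x‖ ≤ 2 := by
  rw [norm_eq_abs, abs_le]
  constructor <;> linarith [neg_one_le_cos x, cos_le_one x]

theorem hasDerivAt_one_sub_cos_mul_sq (β w : ℝ) :
    HasDerivAt (fun w => 1 - cos (β * w ^ 2)) (2 * β * w * sin (β * w ^ 2)) w := by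
  refine ((((hasDerivAt_pow 2 w).const_mul β).cos).const_sub 1).congr_deriv ?_
  norm_num
  ring

theorem countable_setOf_cos_mul_sq_eq_one (hβ : β ≠ 0) :
    {w : ℝ | cos (β * w ^ 2) = 1}.Countable := by
  refine ((countable_range fun n : ℤ => √(n * (2 * π) / β)).union
    (countable_range fun n : ℤ => -√(n * (2 * π) / β))).mono ?_
  intro w hw
  obtain ⟨n, hn⟩ := (cos_eq_one_iff _).1 hw
  have hsqrt : √(n * (2 * π) / β) = |w| := by
    rw [hn, mul_div_cancel_left₀ _ hβ, sqrt_sq_eq_abs]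
  rcases abs_choice w with h | h
  · exact Or.inl ⟨n, hsqrt.trans h⟩
  · exact Or.inr ⟨n, by simp only [hsqrt, h, neg_neg]⟩

theorem setIntegral_mul_one_sub_cos_mul_sq_neg {g : ℝ → ℝ} (hβ : β ≠ 0) (hg : ∀ w > a, g w < 0)
    (hint : IntegrableOn (fun w => g w * (1 - cos (β * w ^ 2))) (Ioi a)) :
    ∫ w in Ioi a, g w * (1 - cos (β * w ^ 2)) < 0 := by
  rw [← neg_pos, ← integral_neg]
  have hnonneg : 0 ≤ᵐ[volume.restrict (Ioi a)] fun w => -(g w * (1 - cos (β * w ^ 2))) := by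
    filter_upwards [ae_restrict_mem measurableSet_Ioi] with w hw
    have := mul_nonneg_of_nonpos_of_nonpos (hg w hw).le (sub_nonpos.2 (cos_le_one (β * w ^ 2)))
    simp only [Pi.zero_apply]
    linarith
  rw [setIntegral_pos_iff_support_of_nonneg_ae hnonneg hint.neg]
  have hsub : Ioi a \ {w | cos (β * w ^ 2) = 1} ⊆
      Function.support (fun w => -(g w * (1 - cos (β * w ^ 2)))) ∩ Ioi a := by
    rintro w ⟨hw, hcos⟩
    refine ⟨?_, hw⟩
    have hcos' : 1 - cos (β * w ^ 2) ≠ 0 := sub_ne_zero.2 (Ne.symm hcos)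
    simpa [Function.mem_support, (hg w hw).ne] using hcos'
  refine lt_of_lt_of_le ?_ (measure_mono hsub)
  rw [measure_sdiff_null ((countable_setOf_cos_mul_sq_eq_one hβ).measure_zero _), volume_Ioi]
  exact ENNReal.zero_lt_top

theorem integrableOn_Ioi_mul_one_sub_cos_mul_sq {F g : ℝ → ℝ} {l : ℝ}
    (hderiv : ∀ w ∈ Ici a, HasDerivAt F (g w) w) (hg : ∀ w ∈ Ioi a, g w ≤ 0)
    (hlim : Tendsto F atTop (𝓝 l)) (β : ℝ) :
    IntegrableOn (fun w => g w * (1 - cos (β * w ^ 2))) (Ioi a) :=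
  (integrableOn_Ioi_deriv_of_nonpos' hderiv hg hlim).mul_bdd (by fun_prop)
    (ae_of_all _ fun w => norm_one_sub_cos_le_two _)

theorem two_mul_setIntegral_Ioi_mul_sin_mul_sq {g : ℝ → ℝ} (ha : 0 < a)
    (hf : IntegrableOn f (Ioi a)) (hlim : Tendsto (fun w => f w / w) atTop (𝓝 0))
    (hderiv : ∀ w ∈ Ici a, HasDerivAt (fun w => f w / w) (g w) w) (hg : ∀ w ∈ Ioi a, g w ≤ 0) :
    2 * β * ∫ w in Ioi a, f w * sin (β * w ^ 2) =
      -(f a / a * (1 - cos (β * a ^ 2))) - ∫ w in Ioi a, g w * (1 - cos (β * w ^ 2)) := by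
  have hg_int := integrableOn_Ioi_mul_one_sub_cos_mul_sq hderiv hg hlim β
  have hf_int : IntegrableOn (fun w => f w * sin (β * w ^ 2)) (Ioi a) :=
    Integrable.mul_sin_mul_sq hf β
  have hu_deriv : ∀ w ∈ Ici a, HasDerivAt (fun w => f w / w * (1 - cos (β * w ^ 2)))
      (g w * (1 - cos (β * w ^ 2)) + 2 * β * (f w * sin (β * w ^ 2))) w := fun w hw =>
    ((hderiv w hw).mul (hasDerivAt_one_sub_cos_mul_sq β w)).congr_deriv (by
      have : w ≠ 0 := (ha.trans_le hw).ne'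
      field_simp)
  have hu_lim : Tendsto (fun w => f w / w * (1 - cos (β * w ^ 2))) atTop (𝓝 0) :=
    hlim.zero_mul_isBoundedUnder_le
      (isBoundedUnder_of_eventually_le (.of_forall fun w => norm_one_sub_cos_le_two (β * w ^ 2)))
  have hFTC :=
    integral_Ioi_of_hasDerivAt_of_tendsto' hu_deriv (hg_int.add (hf_int.const_mul _)) hu_lim
  rw [integral_add hg_int (hf_int.const_mul _), integral_const_mul] at hFTC
  linarith

theorem tendsto_div_mul_one_sub_cos_mul_sq_nhdsGT (hC : ∀ w > 0, |f w| ≤ C) :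
    Tendsto (fun w => f w / w * (1 - cos (β * w ^ 2))) (𝓝[>] 0) (𝓝 0) := by
  have hbound : Tendsto (fun w : ℝ => C * β ^ 2 / 2 * w ^ 3) (𝓝[>] 0) (𝓝 0) :=
    ((show Continuous fun w : ℝ => C * β ^ 2 / 2 * w ^ 3 by fun_prop).tendsto' 0 0
      (by simp)).mono_left nhdsWithin_le_nhds
  refine squeeze_zero_norm' ?_ hbound
  filter_upwards [self_mem_nhdsWithin] with w (hw : 0 < w)
  have hcos : 0 ≤ 1 - cos (β * w ^ 2) := sub_nonneg.2 (cos_le_one _)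
  have hcos' : 1 - cos (β * w ^ 2) ≤ (β * w ^ 2) ^ 2 / 2 := by
    linarith [one_sub_sq_div_two_le_cos (x := β * w ^ 2)]
  have hC0 : 0 ≤ C := (abs_nonneg _).trans (hC w hw)
  rw [norm_mul, norm_div, norm_eq_abs, norm_eq_abs, norm_eq_abs, abs_of_pos hw, abs_of_nonneg hcos]
  calc |f w| / w * (1 - cos (β * w ^ 2)) ≤ C / w * ((β * w ^ 2) ^ 2 / 2) :=
        mul_le_mul (div_le_div_of_nonneg_right (hC w hw) hw.le) hcos' hcos (by positivity)
    _ = C * β ^ 2 / 2 * w ^ 3 := by field_simp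

theorem mul_setIntegral_Ioi_mul_sin_mul_sq_pos (hβ : β ≠ 0) (hf : IntegrableOn f (Ioi 0))
    (hC : ∀ w > 0, |f w| ≤ C) (hderiv : ∀ w > 0, ∃ d < 0, HasDerivAt (fun w => f w / w) d w) :
    0 < β * ∫ w in Ioi 0, f w * sin (β * w ^ 2) := by
  choose! g hg_neg hg using hderiv
  have hlim : Tendsto (fun w => f w / w) atTop (𝓝 0) := by
    simp_rw [div_eq_inv_mul]
    refine tendsto_inv_atTop_zero.zero_mul_isBoundedUnder_le
      (isBoundedUnder_of_eventually_le (a := C) ?_)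
    filter_upwards [eventually_gt_atTop 0] with w hw using hC w hw
  have hint : ∀ a > 0, IntegrableOn (fun w => g w * (1 - cos (β * w ^ 2))) (Ioi a) := fun a ha =>
    integrableOn_Ioi_mul_one_sub_cos_mul_sq (fun w hw => hg w (ha.trans_le hw))
      (fun w hw => (hg_neg w (ha.trans hw)).le) hlim β
  -- The identity is only available on `Ioi a`, away from the singularity of `f w / w` at `0`;
  -- for `a ≤ 1` its right-hand side is bounded below, and we let `a → 0⁺`.
  set K := ∫ w in Ioi 1, g w * (1 - cos (β * w ^ 2))
  have hK : K < 0 := setIntegral_mul_one_sub_cos_mul_sq_neg hβ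
    (fun w hw => hg_neg w (one_pos.trans hw)) (hint 1 one_pos)
  have hlower : ∀ᶠ a in 𝓝[>] 0, -(f a / a * (1 - cos (β * a ^ 2))) - K ≤
      2 * β * ∫ w in Ioi a, f w * sin (β * w ^ 2) := by
    filter_upwards [Ioc_mem_nhdsGT one_pos] with a ⟨ha, ha1⟩
    rw [two_mul_setIntegral_Ioi_mul_sin_mul_sq ha (hf.mono_set (Ioi_subset_Ioi ha.le)) hlim
      (fun w hw => hg w (ha.trans_le hw)) (fun w hw => (hg_neg w (ha.trans hw)).le)]
    have hsplit := intervalIntegral.integral_interval_add_Ioi (hint a ha) (hint 1 one_pos)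
    have hnonpos : ∫ w in a..1, g w * (1 - cos (β * w ^ 2)) ≤ 0 := by
      rw [intervalIntegral.integral_of_le ha1]
      exact setIntegral_nonpos measurableSet_Ioc fun w hw =>
        mul_nonpos_of_nonpos_of_nonneg (hg_neg w (ha.trans hw.1)).le (sub_nonneg.2 (cos_le_one _))
    linarith
  have hF : Tendsto (fun a => 2 * β * ∫ w in Ioi a, f w * sin (β * w ^ 2)) (𝓝[>] 0)
      (𝓝 (2 * β * ∫ w in Ioi 0, f w * sin (β * w ^ 2))) :=
    (IntegrableOn.continuousWithinAt_Ici_primitive_Ioi (Integrable.mul_sin_mul_sq hf β)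
      |>.mono Ioi_subset_Ici_self).const_mul _
  have := le_of_tendsto_of_tendsto
    ((tendsto_div_mul_one_sub_cos_mul_sq_nhdsGT hC).neg.sub_const K) hF hlower
  linarith

end SinePositivity

theorem exists_hasDerivAt_mul_div_neg {p q : ℝ → ℝ} {p' q' w : ℝ} (hp : HasDerivAt p p' w)
    (hq : HasDerivAt q q' w) (hp0 : 0 < p w) (hq0 : 0 < q w) (hp' : p' ≤ 0) (hq' : q' ≤ 0)
    (hw : 0 < w) : ∃ d < 0, HasDerivAt (fun w => p w * q w / w) d w := by
  refine ⟨_, div_neg_of_neg_of_pos ?_ (by positivity), (hp.mul hq).div (hasDerivAt_id w) hw.ne'⟩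
  have : (p' * q w + p w * q') * w ≤ 0 :=
    mul_nonpos_of_nonpos_of_nonneg (by nlinarith) hw.le
  simp only [Pi.mul_apply, mul_one]
  nlinarith [mul_pos hp0 hq0]

noncomputable def gaussErfcPow (m : ℕ) (w : ℝ) : ℝ :=
  exp (-π * m * w ^ 2 / 2) * erfc (√(π / 2) * w) ^ m

theorem gaussErfcPow_pos (m : ℕ) (w : ℝ) : 0 < gaussErfcPow m w :=
  mul_pos (exp_pos _) (pow_pos (erfc_pos _) m)

theorem gaussErfcPow_le (m : ℕ) (w : ℝ) : gaussErfcPow m w ≤ 2 ^ m * exp (-π * m * w ^ 2 / 2) := by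
  rw [gaussErfcPow, mul_comm]
  exact mul_le_mul_of_nonneg_right (pow_le_pow_left₀ (erfc_pos _).le (erfc_le_two _) m)
    (exp_pos _).le

theorem abs_gaussErfcPow_le (m : ℕ) (w : ℝ) : |gaussErfcPow m w| ≤ 2 ^ m := by
  have hexp : exp (-π * m * w ^ 2 / 2) ≤ 1 := exp_le_one_iff.2 (by
    have : 0 ≤ π * m * w ^ 2 := by positivity
    linarith)
  rw [abs_of_pos (gaussErfcPow_pos m w)]
  calc gaussErfcPow m w ≤ 2 ^ m * exp (-π * m * w ^ 2 / 2) := gaussErfcPow_le m w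
    _ ≤ 2 ^ m := mul_le_of_le_one_right (by positivity) hexp

theorem integrable_gaussErfcPow {m : ℕ} (hm : 1 ≤ m) : Integrable (gaussErfcPow m) := by
  have hb : 0 < π * m / 2 := by
    have : (0 : ℝ) < m := by exact_mod_cast hm
    positivity
  refine ((integrable_exp_neg_mul_sq hb).const_mul (2 ^ m)).mono'
    (Continuous.aestronglyMeasurable (by unfold gaussErfcPow; fun_prop)) (ae_of_all _ fun w => ?_)
  rw [norm_of_nonneg (gaussErfcPow_pos m w).le]
  convert gaussErfcPow_le m w using 3
  ring

theorem setIntegral_Ioi_gaussErfcPow_pos {m : ℕ} (hm : 1 ≤ m) :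
    0 < ∫ w in Ioi 0, gaussErfcPow m w := by
  rw [setIntegral_pos_iff_support_of_nonneg_ae (ae_of_all _ fun w => (gaussErfcPow_pos m w).le)
    (integrable_gaussErfcPow hm).integrableOn]
  simp [Function.support, (gaussErfcPow_pos m _).ne']

theorem exists_hasDerivAt_gaussErfcPow_div_neg (m : ℕ) {w : ℝ} (hw : 0 < w) :
    ∃ d < 0, HasDerivAt (fun w => gaussErfcPow m w / w) d w := by
  have hexp := (((hasDerivAt_pow 2 w).const_mul (-π * m)).div_const 2).exp
  have herfc := ((hasDerivAt_erfc (√(π / 2) * w)).comp w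
    ((hasDerivAt_id w).const_mul (√(π / 2)))).pow m
  refine exists_hasDerivAt_mul_div_neg hexp herfc (exp_pos _) (pow_pos (erfc_pos _) m) ?_ ?_ hw
  · exact mul_nonpos_of_nonneg_of_nonpos (exp_pos _).le
      (by rw [neg_mul, neg_mul, neg_div, neg_nonpos]; positivity)
  · refine mul_nonpos_of_nonneg_of_nonpos
      (mul_nonneg m.cast_nonneg (pow_nonneg (erfc_pos _).le _)) ?_
    rw [neg_mul, neg_nonpos]
    positivity

theorem integral_ofReal_add_ofReal_mul_I {μ : Measure ℝ} {F G : ℝ → ℝ} (hF : Integrable F μ)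
    (hG : Integrable G μ) :
    ∫ x, ((F x : ℂ) + (G x : ℂ) * Complex.I) ∂μ = ⟨∫ x, F x ∂μ, ∫ x, G x ∂μ⟩ := by
  rw [integral_add hF.ofReal (hG.ofReal.mul_const _), integral_mul_const, integral_complex_ofReal,
    integral_complex_ofReal, Complex.mk_eq_add_mul_I]

theorem integral_nonzero (m : ℕ) (hm : 1 ≤ m) (α : ℝ) :
    (∫ w in Set.Ioi (0 : ℝ),
        ((Real.exp (-π * m * w ^ 2 / 2) * (erfc (Real.sqrt (π / 2) * w)) ^ m : ℝ) : ℂ) *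
          (Complex.cos (α * π * w ^ 2 / 2) + Complex.I * Complex.sin (α * π * w ^ 2 / 2))) ≠ 0 := by
  set β := α * π / 2
  have hW := (integrable_gaussErfcPow hm).integrableOn (s := Ioi 0)
  have hintegrand : ∀ w : ℝ, ((gaussErfcPow m w : ℝ) : ℂ) *
      (Complex.cos (α * π * w ^ 2 / 2) + Complex.I * Complex.sin (α * π * w ^ 2 / 2)) =
      ((gaussErfcPow m w * cos (β * w ^ 2) : ℝ) : ℂ) +
        ((gaussErfcPow m w * sin (β * w ^ 2) : ℝ) : ℂ) * Complex.I := fun w => by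
    have hθ : (α * π * w ^ 2 / 2 : ℂ) = ((β * w ^ 2 : ℝ) : ℂ) := by simp only [β]; push_cast; ring
    rw [hθ, ← Complex.ofReal_cos, ← Complex.ofReal_sin]
    push_cast
    ring
  show (∫ w in Ioi 0, ((gaussErfcPow m w : ℝ) : ℂ) * _) ≠ 0
  simp_rw [hintegrand]
  rw [integral_ofReal_add_ofReal_mul_I (Integrable.mul_cos_mul_sq hW β)
    (Integrable.mul_sin_mul_sq hW β)]
  intro h
  rcases eq_or_ne α 0 with rfl | hα
  · have hre : ∫ w in Ioi 0, gaussErfcPow m w = 0 := by simpa [β] using congrArg Complex.re h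
    exact (setIntegral_Ioi_gaussErfcPow_pos hm).ne' hre
  · have him : ∫ w in Ioi 0, gaussErfcPow m w * sin (β * w ^ 2) = 0 := by
      simpa using congrArg Complex.im h
    have hβ : β ≠ 0 := by positivity
    have := mul_setIntegral_Ioi_mul_sin_mul_sq_pos hβ hW (fun w _ => abs_gaussErfcPow_le m w)
      (fun w hw => exists_hasDerivAt_gaussErfcPow_div_neg m hw)
    simp [him] at this
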